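/- arXiv:2101.06282 — 7 statements merged into one kernel-verified Lean document; each statement's English description precedes it below -/
import Mathlib

section
/- Let s, i, d, a, r, e be a solution of the SIDARE model on [0,∞) with nonnegative parameters. If s(0), i(0), d(0), a(0), r(0), e(0) are all nonnegative, then s(t), i(t), d(t), a(t), r(t), e(t) are nonnegative for all t ≥ 0. -/
open Set intervalIntegral


open Set intervalIntegral

lemma ode_nonneg (p q g : ℝ → ℝ) (hp : Continuous p)
    (hq : ∀ t ∈ Set.Ici (0:ℝ), 0 ≤ q t)
    (hg : ∀ t ∈ Set.Ici (0:ℝ),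
      HasDerivWithinAt g (q t - p t * g t) (Set.Ici (0:ℝ)) t)
    (hg0 : 0 ≤ g 0) : ∀ t ∈ Set.Ici (0:ℝ), 0 ≤ g t := by
  set P : ℝ → ℝ := fun t => ∫ u in (0:ℝ)..t, p u with hP
  have hPd : ∀ t : ℝ, HasDerivAt P (p t) t := fun t =>
    integral_hasDerivAt_right (hp.intervalIntegrable 0 t)
      (hp.stronglyMeasurable.stronglyMeasurableAtFilter) hp.continuousAt
  set G : ℝ → ℝ := fun t => g t * Real.exp (P t) with hG
  have hGd : ∀ t ∈ Set.Ici (0:ℝ),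
      HasDerivWithinAt G (q t * Real.exp (P t)) (Set.Ici (0:ℝ)) t := by
    intro t ht
    have hE : HasDerivAt (fun u => Real.exp (P u)) (p t * Real.exp (P t)) t := by
      rw [mul_comm]; exact (hPd t).exp
    have := (hg t ht).mul (hE.hasDerivWithinAt)
    refine this.congr_deriv ?_
    ring
  have hmono : MonotoneOn G (Set.Ici (0:ℝ)) := by
    apply monotoneOn_of_deriv_nonneg (convex_Ici 0)
    · intro t ht; exact ((hGd t ht).continuousWithinAt)
    · rw [interior_Ici]; intro t ht
      exact ((hGd t (Set.mem_Ici.mpr (le_of_lt (Set.mem_Ioi.mp ht)))).hasDerivAt (Ici_mem_nhds (Set.mem_Ioi.mp ht))).differentiableAt.differentiableWithinAt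
    · rw [interior_Ici]; intro t ht
      rw [((hGd t (Set.mem_Ici.mpr (le_of_lt (Set.mem_Ioi.mp ht)))).hasDerivAt (Ici_mem_nhds (Set.mem_Ioi.mp ht))).deriv]
      exact mul_nonneg (hq t (Set.mem_Ici.mpr (le_of_lt (Set.mem_Ioi.mp ht)))) (Real.exp_pos _).le
  intro t ht
  have h1 : G 0 ≤ G t := hmono (Set.mem_Ici.mpr (le_refl 0)) ht ht
  have h0 : 0 ≤ G 0 := mul_nonneg hg0 (Real.exp_pos _).le
  have : 0 ≤ g t * Real.exp (P t) := le_trans h0 h1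
  exact nonneg_of_mul_nonneg_left this (Real.exp_pos _)


/-- **Nonnegativity of SIDARE states.**
If a solution of the SIDARE model on `[0,∞)` with nonnegative parameters starts
from nonnegative initial values at `t = 0`, then all states remain nonnegative
for all `t ≥ 0`. -/
theorem sidare_states_nonneg
    (β γi γd γa ν ξi ξd μ : ℝ)
    (hβ : 0 ≤ β) (hγi : 0 ≤ γi) (hγd : 0 ≤ γd) (hγa : 0 ≤ γa)
    (hν : 0 ≤ ν) (hξi : 0 ≤ ξi) (hξd : 0 ≤ ξd) (hμ : 0 ≤ μ)
    (s i d a r e : ℝ → ℝ)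
    (hs : ∀ t ∈ Set.Ici (0:ℝ),
      HasDerivWithinAt s (-β * s t * i t) (Set.Ici (0:ℝ)) t)
    (hi : ∀ t ∈ Set.Ici (0:ℝ),
      HasDerivWithinAt i (β * s t * i t - (γi + ξi + ν) * i t) (Set.Ici (0:ℝ)) t)
    (hd : ∀ t ∈ Set.Ici (0:ℝ),
      HasDerivWithinAt d (ν * i t - (γd + ξd) * d t) (Set.Ici (0:ℝ)) t)
    (ha : ∀ t ∈ Set.Ici (0:ℝ),
      HasDerivWithinAt a (ξi * i t + ξd * d t - (γa + μ) * a t) (Set.Ici (0:ℝ)) t)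
    (hr : ∀ t ∈ Set.Ici (0:ℝ),
      HasDerivWithinAt r (γi * i t + γd * d t + γa * a t) (Set.Ici (0:ℝ)) t)
    (he : ∀ t ∈ Set.Ici (0:ℝ),
      HasDerivWithinAt e (μ * a t) (Set.Ici (0:ℝ)) t)
    (hs0 : 0 ≤ s 0) (hi0 : 0 ≤ i 0) (hd0 : 0 ≤ d 0)
    (ha0 : 0 ≤ a 0) (hr0 : 0 ≤ r 0) (he0 : 0 ≤ e 0) :
    ∀ t ∈ Set.Ici (0:ℝ),
      0 ≤ s t ∧ 0 ≤ i t ∧ 0 ≤ d t ∧ 0 ≤ a t ∧ 0 ≤ r t ∧ 0 ≤ e t := by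
  -- continuity of the states on `[0,∞)`
  have cs : ContinuousOn s (Set.Ici (0:ℝ)) := fun t ht => (hs t ht).continuousWithinAt
  have ci : ContinuousOn i (Set.Ici (0:ℝ)) := fun t ht => (hi t ht).continuousWithinAt
  have cmax : Continuous (fun t : ℝ => max t 0) := continuous_id.max continuous_const
  have hmax : ∀ t : ℝ, max t 0 ∈ Set.Ici (0:ℝ) := fun t => le_max_right t 0
  have hmaxeq : ∀ t ∈ Set.Ici (0:ℝ), max t 0 = t := fun t ht => max_eq_left ht
  -- nonnegativity of i
  have hiN : ∀ t ∈ Set.Ici (0:ℝ), 0 ≤ i t := by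
    apply ode_nonneg (fun t => (γi + ξi + ν) - β * s (max t 0)) (fun _ => 0) i
    · exact continuous_const.sub (continuous_const.mul (cs.comp_continuous cmax hmax))
    · intro t _; exact le_refl 0
    · intro t ht
      convert hi t ht using 1; rw [hmaxeq t ht]; ring
    · exact hi0
  -- nonnegativity of s
  have hsN : ∀ t ∈ Set.Ici (0:ℝ), 0 ≤ s t := by
    apply ode_nonneg (fun t => β * i (max t 0)) (fun _ => 0) s
    · exact continuous_const.mul (ci.comp_continuous cmax hmax)
    · intro t _; exact le_refl 0
    · intro t ht
      convert hs t ht using 1; rw [hmaxeq t ht]; ring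
    · exact hs0
  -- nonnegativity of d
  have hdN : ∀ t ∈ Set.Ici (0:ℝ), 0 ≤ d t := by
    apply ode_nonneg (fun _ => γd + ξd) (fun t => ν * i t) d continuous_const
    · intro t ht; exact mul_nonneg hν (hiN t ht)
    · intro t ht; exact hd t ht
    · exact hd0
  -- nonnegativity of a
  have haN : ∀ t ∈ Set.Ici (0:ℝ), 0 ≤ a t := by
    apply ode_nonneg (fun _ => γa + μ) (fun t => ξi * i t + ξd * d t) a continuous_const
    · intro t ht; exact add_nonneg (mul_nonneg hξi (hiN t ht)) (mul_nonneg hξd (hdN t ht))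
    · intro t ht; exact ha t ht
    · exact ha0
  -- nonnegativity of r
  have hrN : ∀ t ∈ Set.Ici (0:ℝ), 0 ≤ r t := by
    apply ode_nonneg (fun _ => 0) (fun t => γi * i t + γd * d t + γa * a t) r continuous_const
    · intro t ht
      exact add_nonneg (add_nonneg (mul_nonneg hγi (hiN t ht)) (mul_nonneg hγd (hdN t ht)))
        (mul_nonneg hγa (haN t ht))
    · intro t ht; simpa using hr t ht
    · exact hr0
  -- nonnegativity of e
  have heN : ∀ t ∈ Set.Ici (0:ℝ), 0 ≤ e t := by
    apply ode_nonneg (fun _ => 0) (fun t => μ * a t) e continuous_const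
    · intro t ht; exact mul_nonneg hμ (haN t ht)
    · intro t ht; simpa using he t ht
    · exact he0
  intro t ht
  exact ⟨hsN t ht, hiN t ht, hdN t ht, haN t ht, hrN t ht, heN t ht⟩
end

section
/- Let s, i, d, a, r, e be a solution of the SIDARE model on [0,∞) with nonnegative parameters and nonnegative initial values at t = 0. Then the function s is monotonically decreasing on [0,∞), i.e., s(t₁) ≥ s(t₂) whenever 0 ≤ t₁ ≤ t₂. -/
open Set

/-- Sign preservation for a scalar linear ODE `x' = g t * x` on `[0,∞)`. -/
lemma linear_ode_nonneg {x g : ℝ → ℝ}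
    (hg : ContinuousOn g (Ici (0:ℝ)))
    (hx : ∀ t ∈ Ici (0:ℝ), HasDerivWithinAt x (g t * x t) (Ici (0:ℝ)) t)
    (h0 : 0 ≤ x 0) : ∀ t ∈ Ici (0:ℝ), 0 ≤ x t := by
  have hxc : ContinuousOn x (Ici (0:ℝ)) :=
    fun t ht => (hx t ht).continuousWithinAt
  intro t0 ht0
  by_contra hneg
  push_neg at hneg
  have ht0' : (0:ℝ) ≤ t0 := ht0
  have hxc0 : ContinuousOn x (Icc 0 t0) := hxc.mono Icc_subset_Ici_self
  -- there's a zero of x in [0, t0]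
  have hz : (0:ℝ) ∈ x '' Icc 0 t0 :=
    intermediate_value_Icc' ht0' hxc0 ⟨hneg.le, h0⟩
  obtain ⟨t1, ht1, hxt1⟩ := hz
  have ht1sub : Icc t1 t0 ⊆ Ici (0:ℝ) := fun u hu => le_trans ht1.1 hu.1
  -- bound for g on [t1, t0]
  obtain ⟨C, hC⟩ := isCompact_Icc.exists_bound_of_continuousOn (hg.mono ht1sub)
  set K : NNReal := C.toNNReal with hK
  have hKC : (K : ℝ) = max C 0 := Real.coe_toNNReal' C
  set v : ℝ → ℝ → ℝ := fun t y => (if t ∈ Icc t1 t0 then g t else 0) * y with hv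
  have hlip : ∀ t, LipschitzOnWith K (v t) (univ : Set ℝ) := by
    intro t
    apply LipschitzWith.lipschitzOnWith
    apply LipschitzWith.of_dist_le_mul
    intro p q
    have hcb : |(if t ∈ Icc t1 t0 then g t else 0)| ≤ (K : ℝ) := by
      by_cases h : t ∈ Icc t1 t0
      · simp only [if_pos h]
        exact le_trans (hC t h) (hKC ▸ le_max_left C 0)
      · simp only [if_neg h, abs_zero]
        exact hKC ▸ le_max_right C 0
    simp only [hv, Real.dist_eq, ← mul_sub, abs_mul]
    exact mul_le_mul_of_nonneg_right hcb (abs_nonneg _)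
  -- uniqueness: x agrees with the zero solution on [t1, t0]
  have huniq : EqOn x (fun _ => (0:ℝ)) (Icc t1 t0) := by
    apply ODE_solution_unique_of_mem_Icc_right (v := v) (s := fun _ => (univ : Set ℝ))
      (fun t _ => hlip t) (hxc.mono ht1sub)
    · intro t ht
      have hmem : t ∈ Icc t1 t0 := ⟨ht.1, ht.2.le⟩
      have : HasDerivWithinAt x (g t * x t) (Ici t) t :=
        (hx t (ht1sub hmem)).mono (Ici_subset_Ici.2 (ht1sub hmem))
      convert this using 1
      · rfl
      · rfl
      simp only [hv, if_pos hmem]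
    · exact fun t _ => mem_univ _
    · exact continuousOn_const
    · intro t ht
      have : HasDerivWithinAt (fun _ : ℝ => (0:ℝ)) 0 (Ici t) t := hasDerivWithinAt_const t _ 0
      simpa [hv] using this
    · exact fun t _ => mem_univ _
    · exact hxt1
  have := huniq ⟨le_refl t1, ht1.2⟩
  have h0' := huniq ⟨ht1.2, le_refl t0⟩
  simp only at h0'
  exact absurd h0' (by intro h; rw [h] at hneg; exact lt_irrefl 0 hneg)



/-- **Monotonicity of the susceptible state.**
For a solution of the SIDARE model on `[0,∞)` with nonnegative parameters and
nonnegative initial values, the susceptible population `s` is monotonically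
decreasing: `s t₁ ≥ s t₂` whenever `0 ≤ t₁ ≤ t₂`. -/
theorem sidare_s_antitone
    (β γi γd γa ν ξi ξd μ : ℝ)
    (hβ : 0 ≤ β) (hγi : 0 ≤ γi) (hγd : 0 ≤ γd) (hγa : 0 ≤ γa)
    (hν : 0 ≤ ν) (hξi : 0 ≤ ξi) (hξd : 0 ≤ ξd) (hμ : 0 ≤ μ)
    (s i d a r e : ℝ → ℝ)
    (hs : ∀ t ∈ Set.Ici (0:ℝ),
      HasDerivWithinAt s (-β * s t * i t) (Set.Ici (0:ℝ)) t)
    (hi : ∀ t ∈ Set.Ici (0:ℝ),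
      HasDerivWithinAt i (β * s t * i t - (γi + ξi + ν) * i t) (Set.Ici (0:ℝ)) t)
    (hd : ∀ t ∈ Set.Ici (0:ℝ),
      HasDerivWithinAt d (ν * i t - (γd + ξd) * d t) (Set.Ici (0:ℝ)) t)
    (ha : ∀ t ∈ Set.Ici (0:ℝ),
      HasDerivWithinAt a (ξi * i t + ξd * d t - (γa + μ) * a t) (Set.Ici (0:ℝ)) t)
    (hr : ∀ t ∈ Set.Ici (0:ℝ),
      HasDerivWithinAt r (γi * i t + γd * d t + γa * a t) (Set.Ici (0:ℝ)) t)
    (he : ∀ t ∈ Set.Ici (0:ℝ),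
      HasDerivWithinAt e (μ * a t) (Set.Ici (0:ℝ)) t)
    (hs0 : 0 ≤ s 0) (hi0 : 0 ≤ i 0) (hd0 : 0 ≤ d 0)
    (ha0 : 0 ≤ a 0) (hr0 : 0 ≤ r 0) (he0 : 0 ≤ e 0) :
    ∀ t₁ t₂ : ℝ, 0 ≤ t₁ → t₁ ≤ t₂ → s t₂ ≤ s t₁ := by
  have hsc : ContinuousOn s (Ici (0:ℝ)) := fun t ht => (hs t ht).continuousWithinAt
  have hic : ContinuousOn i (Ici (0:ℝ)) := fun t ht => (hi t ht).continuousWithinAt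
  -- i is nonnegative
  have hinn : ∀ t ∈ Ici (0:ℝ), 0 ≤ i t := by
    apply linear_ode_nonneg (g := fun t => β * s t - (γi + ξi + ν)) _ _ hi0
    · exact ((continuousOn_const.mul hsc).sub continuousOn_const)
    · intro t ht
      have := hi t ht
      convert this using 1
      ring
  -- s is nonnegative
  have hsnn : ∀ t ∈ Ici (0:ℝ), 0 ≤ s t := by
    apply linear_ode_nonneg (g := fun t => -β * i t) _ _ hs0
    · exact continuousOn_const.mul hic
    · intro t ht
      have := hs t ht
      convert this using 1
      ring
  -- monotonicity from nonpositive derivative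
  have hanti : AntitoneOn s (Ici (0:ℝ)) := by
    apply antitoneOn_of_deriv_nonpos (convex_Ici 0) hsc
    · intro t ht
      rw [interior_Ici] at ht
      exact ((hs t (mem_Ici.2 (le_of_lt (mem_Ioi.1 ht)))).hasDerivAt (Ici_mem_nhds ht)).differentiableAt.differentiableWithinAt
    · intro t ht
      rw [interior_Ici] at ht
      have hda : HasDerivAt s (-β * s t * i t) t := (hs t (mem_Ici.2 (le_of_lt (mem_Ioi.1 ht)))).hasDerivAt (Ici_mem_nhds ht)
      rw [hda.deriv]
      have h1 : 0 ≤ s t := hsnn t (mem_Ici.2 (le_of_lt (mem_Ioi.1 ht)))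
      have h2 : 0 ≤ i t := hinn t (mem_Ici.2 (le_of_lt (mem_Ioi.1 ht)))
      have h3 : 0 ≤ β * s t * i t := mul_nonneg (mul_nonneg hβ h1) h2
      linarith
  intro t₁ t₂ h1 h2
  exact hanti h1 (le_trans h1 h2) h2
end

section
/- Let s, i, d, a, r, e be a solution of the SIDARE model on [0,∞) with nonnegative parameters and nonnegative initial values at t = 0. Then the functions r and e are monotonically increasing on [0,∞), i.e., r(t₁) ≤ r(t₂) and e(t₁) ≤ e(t₂) whenever 0 ≤ t₁ ≤ t₂. -/
open Set

/-- If `f` has nonnegative right derivative on `Ici 0`, it is monotone there. -/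
lemma sidare_monoIci {f f' : ℝ → ℝ}
    (hf : ∀ t ∈ Set.Ici (0:ℝ), HasDerivWithinAt f (f' t) (Set.Ici 0) t)
    (h0 : ∀ t ∈ Set.Ici (0:ℝ), 0 ≤ f' t) : MonotoneOn f (Set.Ici 0) := by
  apply monotoneOn_of_hasDerivWithinAt_nonneg (convex_Ici 0)
    (fun t ht => (hf t ht).continuousWithinAt)
  · rw [interior_Ici]
    exact fun x hx => ((hf x (mem_Ici.2 (le_of_lt (mem_Ioi.1 hx)))).mono Ioi_subset_Ici_self)
  · rw [interior_Ici]
    exact fun x hx => h0 x (mem_Ici.2 (le_of_lt (mem_Ioi.1 hx)))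

/-- Solutions of `f' = p f` with continuous `p` and `f 0 ≥ 0` stay nonnegative. -/
lemma sidare_nonneg_linear {f p : ℝ → ℝ} (hp : ContinuousOn p (Set.Ici 0))
    (hf : ∀ t ∈ Set.Ici (0:ℝ), HasDerivWithinAt f (p t * f t) (Set.Ici 0) t)
    (h0 : 0 ≤ f 0) : ∀ t ∈ Set.Ici (0:ℝ), 0 ≤ f t := by
  intro T hT
  set G : ℝ → ℝ := fun u => ∫ x in (0:ℝ)..u, p x with hGdef
  set w : ℝ → ℝ := fun u => f u * Real.exp (-(G u)) with hwdef
  have hGicc : ∀ x ∈ Icc (0:ℝ) T, HasDerivWithinAt G (p x) (Icc 0 T) x := by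
    intro x hx
    haveI : Fact (x ∈ Icc (0:ℝ) T) := ⟨hx⟩
    have h1 : IntervalIntegrable p MeasureTheory.volume 0 x := by
      apply ContinuousOn.intervalIntegrable
      apply hp.mono
      rw [Set.uIcc_of_le hx.1]
      exact Icc_subset_Ici_self
    have h2 : StronglyMeasurableAtFilter p (nhdsWithin x (Icc (0:ℝ) T)) :=
      (hp.mono Icc_subset_Ici_self).stronglyMeasurableAtFilter_nhdsWithin
        measurableSet_Icc x
    exact intervalIntegral.integral_hasDerivWithinAt_right h1 h2
      ((hp.mono Icc_subset_Ici_self) x hx)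
  have hGIci : ∀ x ∈ Ico (0:ℝ) T, HasDerivWithinAt G (p x) (Ici x) x := by
    intro x hx
    apply (hGicc x ⟨hx.1, hx.2.le⟩).mono_of_mem_nhdsWithin
    apply mem_nhdsWithin.2 ⟨Iio T, isOpen_Iio, hx.2, ?_⟩
    intro y hy
    exact ⟨le_trans hx.1 hy.2, hy.1.le⟩
  have hwderiv : ∀ x ∈ Ico (0:ℝ) T, HasDerivWithinAt w 0 (Ici x) x := by
    intro x hx
    have hfx : HasDerivWithinAt f (p x * f x) (Ici x) x :=
      (hf x hx.1).mono (Ici_subset_Ici.2 hx.1)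
    have hex : HasDerivWithinAt (fun u => Real.exp (-(G u)))
        (Real.exp (-(G x)) * (-(p x))) (Ici x) x := (hGIci x hx).neg.exp
    have := hfx.mul hex
    rw [show p x * f x * Real.exp (-(G x)) + f x * (Real.exp (-(G x)) * -p x) = 0 by ring] at this
    exact this
  have hwcont : ContinuousOn w (Icc 0 T) := by
    apply ContinuousOn.mul
    · intro x hx
      exact ((hf x hx.1).continuousWithinAt).mono Icc_subset_Ici_self
    · exact (Real.continuous_exp.comp_continuousOn
        (fun x hx => ((hGicc x hx).continuousWithinAt).neg))
  have hwT : w T = w 0 :=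
    constant_of_has_deriv_right_zero hwcont hwderiv T (right_mem_Icc.2 hT)
  have hG0 : G 0 = 0 := intervalIntegral.integral_same
  have hw0 : w 0 = f 0 := by simp [hwdef, hG0]
  have hwTnn : 0 ≤ w T := by rw [hwT, hw0]; exact h0
  have hE : Real.exp (-(G T)) * Real.exp (G T) = 1 := by
    rw [← Real.exp_add]; simp
  have h1 : 0 ≤ f T * (Real.exp (-(G T)) * Real.exp (G T)) := by
    rw [← mul_assoc]
    exact mul_nonneg hwTnn (Real.exp_pos _).le
  rwa [hE, mul_one] at h1

/-- Solutions of `f' = g - c f` with `g ≥ 0` and `f 0 ≥ 0` stay nonnegative. -/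
lemma sidare_nonneg_affine {f g : ℝ → ℝ} {c : ℝ}
    (hf : ∀ t ∈ Set.Ici (0:ℝ), HasDerivWithinAt f (g t - c * f t) (Set.Ici 0) t)
    (hg : ∀ t ∈ Set.Ici (0:ℝ), 0 ≤ g t)
    (h0 : 0 ≤ f 0) : ∀ t ∈ Set.Ici (0:ℝ), 0 ≤ f t := by
  set v : ℝ → ℝ := fun u => f u * Real.exp (c * u) with hvdef
  have hv : ∀ t ∈ Set.Ici (0:ℝ),
      HasDerivWithinAt v (g t * Real.exp (c * t)) (Set.Ici 0) t := by
    intro t ht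
    have he : HasDerivAt (fun u => Real.exp (c * u)) (Real.exp (c * t) * c) t := by
      have := ((hasDerivAt_id t).const_mul c).exp
      simpa using this
    have := (hf t ht).mul he.hasDerivWithinAt
    rw [show (g t - c * f t) * Real.exp (c * t) + f t * (Real.exp (c * t) * c)
      = g t * Real.exp (c * t) by ring] at this
    exact this
  have hmono : MonotoneOn v (Set.Ici 0) :=
    sidare_monoIci hv (fun t ht => mul_nonneg (hg t ht) (Real.exp_pos _).le)
  intro t ht
  have hv0 : v 0 = f 0 := by simp [hvdef]
  have hvt : 0 ≤ v t := by
    have := hmono (self_mem_Ici) ht ht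
    rw [hv0] at this
    exact le_trans h0 this
  have hE : Real.exp (c * t) * Real.exp (-(c * t)) = 1 := by
    rw [← Real.exp_add]; simp
  have h1 : 0 ≤ f t * (Real.exp (c * t) * Real.exp (-(c * t))) := by
    rw [← mul_assoc]
    exact mul_nonneg hvt (Real.exp_pos _).le
  rwa [hE, mul_one] at h1

/-- **Monotonicity of the recovered and extinct states.**
For a solution of the SIDARE model on `[0,∞)` with nonnegative parameters and
nonnegative initial values, the recovered population `r` and the deceased
population `e` are monotonically increasing: `r t₁ ≤ r t₂` and `e t₁ ≤ e t₂`
whenever `0 ≤ t₁ ≤ t₂`. -/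
theorem sidare_r_e_monotone
    (β γi γd γa ν ξi ξd μ : ℝ)
    (hβ : 0 ≤ β) (hγi : 0 ≤ γi) (hγd : 0 ≤ γd) (hγa : 0 ≤ γa)
    (hν : 0 ≤ ν) (hξi : 0 ≤ ξi) (hξd : 0 ≤ ξd) (hμ : 0 ≤ μ)
    (s i d a r e : ℝ → ℝ)
    (hs : ∀ t ∈ Set.Ici (0:ℝ),
      HasDerivWithinAt s (-β * s t * i t) (Set.Ici (0:ℝ)) t)
    (hi : ∀ t ∈ Set.Ici (0:ℝ),
      HasDerivWithinAt i (β * s t * i t - (γi + ξi + ν) * i t) (Set.Ici (0:ℝ)) t)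
    (hd : ∀ t ∈ Set.Ici (0:ℝ),
      HasDerivWithinAt d (ν * i t - (γd + ξd) * d t) (Set.Ici (0:ℝ)) t)
    (ha : ∀ t ∈ Set.Ici (0:ℝ),
      HasDerivWithinAt a (ξi * i t + ξd * d t - (γa + μ) * a t) (Set.Ici (0:ℝ)) t)
    (hr : ∀ t ∈ Set.Ici (0:ℝ),
      HasDerivWithinAt r (γi * i t + γd * d t + γa * a t) (Set.Ici (0:ℝ)) t)
    (he : ∀ t ∈ Set.Ici (0:ℝ),
      HasDerivWithinAt e (μ * a t) (Set.Ici (0:ℝ)) t)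
    (hs0 : 0 ≤ s 0) (hi0 : 0 ≤ i 0) (hd0 : 0 ≤ d 0)
    (ha0 : 0 ≤ a 0) (hr0 : 0 ≤ r 0) (he0 : 0 ≤ e 0) :
    ∀ t₁ t₂ : ℝ, 0 ≤ t₁ → t₁ ≤ t₂ → r t₁ ≤ r t₂ ∧ e t₁ ≤ e t₂ := by
  -- nonnegativity of i
  have hinn : ∀ t ∈ Set.Ici (0:ℝ), 0 ≤ i t := by
    apply sidare_nonneg_linear (p := fun u => β * s u - (γi + ξi + ν))
      (fun x hx => (((hs x hx).continuousWithinAt.const_mul β).sub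
        continuousWithinAt_const)) ?_ hi0
    intro t ht
    have := hi t ht
    convert this using 1
    ring
  -- nonnegativity of d
  have hdnn : ∀ t ∈ Set.Ici (0:ℝ), 0 ≤ d t :=
    sidare_nonneg_affine (g := fun u => ν * i u) hd
      (fun t ht => mul_nonneg hν (hinn t ht)) hd0
  -- nonnegativity of a
  have hann : ∀ t ∈ Set.Ici (0:ℝ), 0 ≤ a t :=
    sidare_nonneg_affine (g := fun u => ξi * i u + ξd * d u) ha
      (fun t ht => add_nonneg (mul_nonneg hξi (hinn t ht))
        (mul_nonneg hξd (hdnn t ht))) ha0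
  have hrmono : MonotoneOn r (Set.Ici 0) :=
    sidare_monoIci hr (fun t ht => add_nonneg (add_nonneg
      (mul_nonneg hγi (hinn t ht)) (mul_nonneg hγd (hdnn t ht)))
      (mul_nonneg hγa (hann t ht)))
  have hemono : MonotoneOn e (Set.Ici 0) :=
    sidare_monoIci he (fun t ht => mul_nonneg hμ (hann t ht))
  intro t₁ t₂ h1 h12
  exact ⟨hrmono h1 (le_trans h1 h12) h12, hemono h1 (le_trans h1 h12) h12⟩
end

section
/- Let s, i, d, a, r, e be a solution of the SIDARE model on [0,∞) with nonnegative parameters and nonnegative initial values at t = 0. Suppose β s(0) < γ_i + ξ_i + ν, and set ρ = (γ_i + ξ_i + ν) − β s(0) > 0. Then i(t) ≤ i(0) · exp(−ρ t) for all t ≥ 0. -/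
open MeasureTheory intervalIntegral Set

/-- A scalar linear ODE `f' = k·f` on `[0,∞)` has solution `f 0 * exp (∫ k)`. -/
lemma sidare_lin_ode (k f : ℝ → ℝ) (hk : ContinuousOn k (Set.Ici 0))
    (hf : ∀ t ∈ Set.Ici (0:ℝ), HasDerivWithinAt f (k t * f t) (Set.Ici (0:ℝ)) t) :
    ∀ t ∈ Set.Ici (0:ℝ), f t = f 0 * Real.exp (∫ x in (0:ℝ)..t, k x) := by
  intro t ht
  simp only [Set.mem_Ici] at ht
  set K : ℝ → ℝ := fun u => ∫ x in (0:ℝ)..u, k x with hKdef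
  have hkint : ∀ b : ℝ, 0 ≤ b → IntervalIntegrable k volume 0 b := fun b hb =>
    (hk.mono (by rw [Set.uIcc_of_le hb]; exact fun x hx => hx.1)).intervalIntegrable
  have hfc : ContinuousOn f (Set.Ici 0) := fun x hx => (hf x hx).continuousWithinAt
  have hKc : ContinuousOn K (Set.Icc 0 t) := by
    have := continuousOn_primitive_interval (μ := volume) (f := k) (a := 0) (b := t)
      ((hk.mono (by rw [Set.uIcc_of_le ht]; exact fun x hx => hx.1)).integrableOn_compact
        (by rw [Set.uIcc_of_le ht]; exact isCompact_Icc))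
    rwa [Set.uIcc_of_le ht] at this
  have hg : ∀ x ∈ Set.Ico 0 t,
      HasDerivWithinAt (fun u => f u * Real.exp (-K u)) 0 (Set.Ici x) x := by
    intro x hx
    have hx0 : (0:ℝ) ≤ x := hx.1
    have hKx : HasDerivWithinAt K (k x) (Set.Ici x) x := by
      refine integral_hasDerivWithinAt_right (hkint x hx0)
        ⟨Set.Ici 0, ?_, (hk.aestronglyMeasurable measurableSet_Ici)⟩
        ((hk.continuousWithinAt (Set.mem_Ici.2 hx0)).mono
          (fun y hy => Set.mem_Ici.2 (le_of_lt (lt_of_le_of_lt hx0 hy))))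
      exact Filter.mem_of_superset self_mem_nhdsWithin
        (fun y hy => Set.mem_Ici.2 (le_of_lt (lt_of_le_of_lt hx0 hy)))
    have hfx : HasDerivWithinAt f (k x * f x) (Set.Ici x) x :=
      (hf x (Set.mem_Ici.2 hx0)).mono (fun y hy => Set.mem_Ici.2 (le_trans hx0 hy))
    have hex : HasDerivWithinAt (fun u => Real.exp (-K u))
        (Real.exp (-K x) * (-k x)) (Set.Ici x) x := hKx.neg.exp
    have : HasDerivWithinAt (fun u => f u * Real.exp (-K u))
        (k x * f x * Real.exp (-K x) + f x * (Real.exp (-K x) * -k x)) (Set.Ici x) x :=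
      hfx.fun_mul hex
    convert this using 1
    ring
  have hgc : ContinuousOn (fun u => f u * Real.exp (-K u)) (Set.Icc 0 t) :=
    (hfc.mono (fun y hy => hy.1)).mul (hKc.neg.rexp)
  have hconst := constant_of_has_deriv_right_zero hgc hg t (Set.mem_Icc.2 ⟨ht, le_rfl⟩)
  have hK0 : K 0 = 0 := intervalIntegral.integral_same
  simp only [hK0, neg_zero, Real.exp_zero, mul_one] at hconst
  have hexp : Real.exp (-K t) ≠ 0 := Real.exp_ne_zero _
  have : f t = f 0 / Real.exp (-K t) := by
    field_simp at hconst ⊢; linarith [hconst]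
  rw [this, Real.exp_neg]
  field_simp
  rfl

/-- **Exponential decay bound for the infected state.**
For a solution of the SIDARE model on `[0,∞)` with nonnegative parameters,
nonnegative initial values, if `β s(0) < γ_i + ξ_i + ν` and
`ρ = (γ_i + ξ_i + ν) − β s(0) > 0`, then `i t ≤ i 0 * exp (−ρ t)` for all
`t ≥ 0`. -/
theorem sidare_i_exp_decay
    (β γi γd γa ν ξi ξd μ : ℝ)
    (hβ : 0 ≤ β) (hγi : 0 ≤ γi) (hγd : 0 ≤ γd) (hγa : 0 ≤ γa)
    (hν : 0 ≤ ν) (hξi : 0 ≤ ξi) (hξd : 0 ≤ ξd) (hμ : 0 ≤ μ)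
    (s i d a r e : ℝ → ℝ)
    (hs : ∀ t ∈ Set.Ici (0:ℝ),
      HasDerivWithinAt s (-β * s t * i t) (Set.Ici (0:ℝ)) t)
    (hi : ∀ t ∈ Set.Ici (0:ℝ),
      HasDerivWithinAt i (β * s t * i t - (γi + ξi + ν) * i t) (Set.Ici (0:ℝ)) t)
    (hd : ∀ t ∈ Set.Ici (0:ℝ),
      HasDerivWithinAt d (ν * i t - (γd + ξd) * d t) (Set.Ici (0:ℝ)) t)
    (ha : ∀ t ∈ Set.Ici (0:ℝ),
      HasDerivWithinAt a (ξi * i t + ξd * d t - (γa + μ) * a t) (Set.Ici (0:ℝ)) t)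
    (hr : ∀ t ∈ Set.Ici (0:ℝ),
      HasDerivWithinAt r (γi * i t + γd * d t + γa * a t) (Set.Ici (0:ℝ)) t)
    (he : ∀ t ∈ Set.Ici (0:ℝ),
      HasDerivWithinAt e (μ * a t) (Set.Ici (0:ℝ)) t)
    (hs0 : 0 ≤ s 0) (hi0 : 0 ≤ i 0) (hd0 : 0 ≤ d 0)
    (ha0 : 0 ≤ a 0) (hr0 : 0 ≤ r 0) (he0 : 0 ≤ e 0)
    (ρ : ℝ) (hρdef : ρ = (γi + ξi + ν) - β * s 0)
    (hρpos : 0 < ρ) :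
    ∀ t ∈ Set.Ici (0:ℝ), i t ≤ i 0 * Real.exp (-ρ * t) := by
  have hscont : ContinuousOn s (Set.Ici 0) := fun x hx => (hs x hx).continuousWithinAt
  have hicont : ContinuousOn i (Set.Ici 0) := fun x hx => (hi x hx).continuousWithinAt
  -- representation of i
  have hirep := sidare_lin_ode (fun u => β * s u - (γi + ξi + ν)) i
    ((continuousOn_const.mul hscont).sub continuousOn_const)
    (fun t ht => by convert hi t ht using 1; ring)
  -- representation of s
  have hsrep := sidare_lin_ode (fun u => -β * i u) s
    (continuousOn_const.mul hicont)
    (fun t ht => by convert hs t ht using 1; ring)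
  -- i is nonnegative
  have hipos : ∀ x ∈ Set.Ici (0:ℝ), 0 ≤ i x := fun x hx => by
    rw [hirep x hx]; positivity
  -- s is bounded by s 0
  have hsle : ∀ x ∈ Set.Ici (0:ℝ), s x ≤ s 0 := by
    intro x hx
    rw [hsrep x hx]
    have hint : (∫ u in (0:ℝ)..x, -β * i u) ≤ 0 := by
      have : (∫ u in (0:ℝ)..x, -β * i u) = -∫ u in (0:ℝ)..x, β * i u := by
        rw [← intervalIntegral.integral_neg]; congr 1; funext u; ring
      rw [this, neg_nonpos]
      exact intervalIntegral.integral_nonneg hx (fun u hu =>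
        mul_nonneg hβ (hipos u hu.1))
    calc s 0 * Real.exp (∫ u in (0:ℝ)..x, -β * i u)
        ≤ s 0 * Real.exp 0 := by
          exact mul_le_mul_of_nonneg_left (Real.exp_le_exp.2 hint) hs0
      _ = s 0 := by simp
  intro t ht
  have ht' : (0:ℝ) ≤ t := ht
  rw [hirep t ht]
  have hintle : (∫ u in (0:ℝ)..t, β * s u - (γi + ξi + ν)) ≤ -ρ * t := by
    have h1 : (∫ u in (0:ℝ)..t, β * s u - (γi + ξi + ν))
        ≤ ∫ _u in (0:ℝ)..t, β * s 0 - (γi + ξi + ν) := by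
      apply intervalIntegral.integral_mono_on ht'
      · refine ContinuousOn.intervalIntegrable ?_
        rw [Set.uIcc_of_le ht']
        exact ((continuousOn_const.mul hscont).sub continuousOn_const).mono
          (fun y hy => hy.1)
      · exact intervalIntegrable_const
      · intro u hu
        have := hsle u hu.1
        nlinarith
    have h2 : (∫ _u in (0:ℝ)..t, β * s 0 - (γi + ξi + ν)) = -ρ * t := by
      rw [intervalIntegral.integral_const]
      rw [hρdef]; ring_nf
    linarith
  exact mul_le_mul_of_nonneg_left (Real.exp_le_exp.2 hintle) hi0
end

section
/- Let s, i, d, a, r, e be a solution of the SIDARE model on [0,∞) with nonnegative parameters satisfying γ_d + ξ_d > 0 and γ_a + μ > 0, nonnegative initial values at t = 0, and β s(0) < γ_i + ξ_i + ν. Then i(t) → 0, d(t) → 0 and a(t) → 0 as t → ∞. -/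
open Set Filter MeasureTheory intervalIntegral Real Topology

lemma my_primitive {c : ℝ → ℝ} (hc : ContinuousOn c (Set.Ici 0)) :
    ∀ t ∈ Set.Ici (0:ℝ),
      HasDerivWithinAt (fun u => ∫ x in (0:ℝ)..u, c x) (c t) (Set.Ici 0) t := by
  intro t ht
  have hint : IntervalIntegrable c volume 0 t := by
    apply ContinuousOn.intervalIntegrable
    rw [uIcc_of_le ht]
    exact hc.mono (Icc_subset_Ici_self)
  rcases eq_or_lt_of_le (Set.mem_Ici.mp ht : (0:ℝ) ≤ t) with rfl | htpos
  · have hmeas : StronglyMeasurableAtFilter c (𝓝[>] (0:ℝ)) volume := by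
      refine ⟨Set.Ioi 0, self_mem_nhdsWithin, ?_⟩
      exact (hc.mono (Set.Ioi_subset_Ici_self)).aestronglyMeasurable measurableSet_Ioi
    exact intervalIntegral.integral_hasDerivWithinAt_right (t := Set.Ioi 0) hint hmeas
      ((hc 0 Set.self_mem_Ici).mono Set.Ioi_subset_Ici_self)
  · have hca : ContinuousAt c t :=
      (hc t ht).continuousAt (Ici_mem_nhds htpos)
    have hmeas : StronglyMeasurableAtFilter c (𝓝 t) volume := by
      refine ⟨Set.Ioi 0, Ioi_mem_nhds htpos, ?_⟩
      exact (hc.mono (Set.Ioi_subset_Ici_self)).aestronglyMeasurable measurableSet_Ioi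
    exact (intervalIntegral.integral_hasDerivAt_right hint hmeas hca).hasDerivWithinAt

lemma my_monotoneOn_Ici {f f' : ℝ → ℝ}
    (hf : ∀ t ∈ Set.Ici (0:ℝ), HasDerivWithinAt f (f' t) (Set.Ici 0) t)
    (h0 : ∀ t ∈ Set.Ioi (0:ℝ), 0 ≤ f' t) : MonotoneOn f (Set.Ici 0) := by
  apply monotoneOn_of_hasDerivWithinAt_nonneg (f' := f') (convex_Ici 0)
    (fun t ht => (hf t ht).continuousWithinAt)
  · intro x hx
    rw [interior_Ici] at hx ⊢
    exact ((hf x (Set.mem_Ici.mpr (le_of_lt (Set.mem_Ioi.mp hx)))).hasDerivAt (Ici_mem_nhds hx)).hasDerivWithinAt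
  · intro x hx; rw [interior_Ici] at hx; exact h0 x hx

lemma my_antitoneOn_Ici {f f' : ℝ → ℝ}
    (hf : ∀ t ∈ Set.Ici (0:ℝ), HasDerivWithinAt f (f' t) (Set.Ici 0) t)
    (h0 : ∀ t ∈ Set.Ioi (0:ℝ), f' t ≤ 0) : AntitoneOn f (Set.Ici 0) := by
  apply antitoneOn_of_hasDerivWithinAt_nonpos (f' := f') (convex_Ici 0)
    (fun t ht => (hf t ht).continuousWithinAt)
  · intro x hx
    rw [interior_Ici] at hx ⊢
    exact ((hf x (Set.mem_Ici.mpr (le_of_lt (Set.mem_Ioi.mp hx)))).hasDerivAt (Ici_mem_nhds hx)).hasDerivWithinAt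
  · intro x hx; rw [interior_Ici] at hx; exact h0 x hx

lemma my_constOn_Ici {f : ℝ → ℝ}
    (hf : ∀ t ∈ Set.Ici (0:ℝ), HasDerivWithinAt f 0 (Set.Ici 0) t) :
    ∀ t ∈ Set.Ici (0:ℝ), f t = f 0 := by
  intro t ht
  have h1 := my_monotoneOn_Ici (f' := fun _ => 0) hf (fun _ _ => le_rfl)
  have h2 := my_antitoneOn_Ici (f' := fun _ => 0) hf (fun _ _ => le_rfl)
  exact le_antisymm (h2 Set.self_mem_Ici ht ht) (h1 Set.self_mem_Ici ht ht)

lemma my_ode_exp {f c : ℝ → ℝ} (hc : ContinuousOn c (Set.Ici 0))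
    (hf : ∀ t ∈ Set.Ici (0:ℝ), HasDerivWithinAt f (c t * f t) (Set.Ici 0) t) :
    ∀ t ∈ Set.Ici (0:ℝ), f t = f 0 * Real.exp (∫ x in (0:ℝ)..t, c x) := by
  have hΦ := my_primitive hc
  set Φ : ℝ → ℝ := fun u => ∫ x in (0:ℝ)..u, c x with hΦdef
  have key : ∀ t ∈ Set.Ici (0:ℝ),
      HasDerivWithinAt (fun u => f u * Real.exp (-Φ u)) 0 (Set.Ici 0) t := by
    intro t ht
    have h1 : HasDerivWithinAt (fun u => Real.exp (-Φ u))
        (Real.exp (-Φ t) * (-c t)) (Set.Ici 0) t := ((hΦ t ht).neg).exp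
    have h2 : HasDerivWithinAt (fun u => f u * Real.exp (-Φ u)) _ _ _ := (hf t ht).mul h1
    convert h2 using 1
    ring
  have hconst := my_constOn_Ici key
  intro t ht
  have h0 : Φ 0 = 0 := by simp [hΦdef]
  have := hconst t ht
  simp only [h0, neg_zero, Real.exp_zero, mul_one] at this
  have hexp : Real.exp (-Φ t) ≠ 0 := Real.exp_ne_zero _
  field_simp [Real.exp_neg] at this ⊢
  rw [← this, mul_assoc, ← Real.exp_add, hΦdef]; simp

lemma my_decay_bound {g q : ℝ → ℝ} {lam al Q : ℝ} (hal : 0 < al) (halam : al < lam)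
    (hQ : 0 ≤ Q)
    (hg : ∀ t ∈ Set.Ici (0:ℝ), HasDerivWithinAt g (q t - lam * g t) (Set.Ici 0) t)
    (hq0 : ∀ t ∈ Set.Ici (0:ℝ), 0 ≤ q t)
    (hqQ : ∀ t ∈ Set.Ici (0:ℝ), q t ≤ Q * Real.exp (-al * t))
    (hg0 : 0 ≤ g 0) :
    ∀ t ∈ Set.Ici (0:ℝ), 0 ≤ g t ∧
      g t ≤ max (g 0) (Q / (lam - al)) * Real.exp (-al * t) := by
  set C := max (g 0) (Q / (lam - al)) with hC
  have hlamal : 0 < lam - al := by linarith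
  have hCg0 : g 0 ≤ C := le_max_left _ _
  have hCQ : Q ≤ C * (lam - al) := by
    rw [← div_le_iff₀ hlamal] at *
    exact le_max_right _ _
  -- F t = g t * exp (lam * t)
  have hF : ∀ t ∈ Set.Ici (0:ℝ),
      HasDerivWithinAt (fun u => g u * Real.exp (lam * u))
        (Real.exp (lam * t) * q t) (Set.Ici 0) t := by
    intro t ht
    have he : HasDerivWithinAt (fun u : ℝ => Real.exp (lam * u))
        (Real.exp (lam * t) * lam) (Set.Ici 0) t := by
      have : HasDerivWithinAt (fun u : ℝ => lam * u) lam (Set.Ici 0) t := by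
        simpa using ((hasDerivAt_id t).const_mul lam).hasDerivWithinAt (s := Set.Ici 0)
      simpa using this.exp
    have h2 : HasDerivWithinAt (fun u => g u * Real.exp (lam * u)) _ _ _ := (hg t ht).mul he
    convert h2 using 1
    ring
  have hFmono : MonotoneOn (fun u => g u * Real.exp (lam * u)) (Set.Ici 0) :=
    my_monotoneOn_Ici hF (fun t ht => mul_nonneg (Real.exp_pos _).le (hq0 t (Set.mem_Ici.mpr (le_of_lt (Set.mem_Ioi.mp ht)))))
  intro t ht
  have hgpos : 0 ≤ g t := by
    have := hFmono Set.self_mem_Ici ht ht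
    simp only [mul_zero, Real.exp_zero, mul_one] at this
    nlinarith [Real.exp_pos (lam * t), this]
  refine ⟨hgpos, ?_⟩
  -- G t = g t * exp (lam t) - C * exp ((lam - al) t)
  have hG : ∀ u ∈ Set.Ici (0:ℝ),
      HasDerivWithinAt (fun u => g u * Real.exp (lam * u) - C * Real.exp ((lam - al) * u))
        (Real.exp (lam * u) * q u - C * ((lam - al) * Real.exp ((lam - al) * u)))
        (Set.Ici 0) u := by
    intro u hu
    have he : HasDerivWithinAt (fun u : ℝ => Real.exp ((lam - al) * u))
        (Real.exp ((lam - al) * u) * (lam - al)) (Set.Ici 0) u := by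
      have : HasDerivWithinAt (fun v : ℝ => (lam - al) * v) (lam - al) (Set.Ici 0) u := by
        simpa using ((hasDerivAt_id u).const_mul (lam - al)).hasDerivWithinAt (s := Set.Ici 0)
      simpa using this.exp
    have this : HasDerivWithinAt (fun u => g u * Real.exp (lam * u) - C * Real.exp ((lam - al) * u)) _ _ _ := (hF u hu).sub ((he.const_mul C))
    convert this using 1
    ring
  have hGanti : AntitoneOn
      (fun u => g u * Real.exp (lam * u) - C * Real.exp ((lam - al) * u)) (Set.Ici 0) := by
    apply my_antitoneOn_Ici hG
    intro u hu
    have hu' : (0:ℝ) ≤ u := le_of_lt hu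
    have h1 : q u ≤ Q * Real.exp (-al * u) := hqQ u hu'
    have h2 : Real.exp (lam * u) * q u ≤ Q * Real.exp ((lam - al) * u) := by
      calc Real.exp (lam * u) * q u ≤ Real.exp (lam * u) * (Q * Real.exp (-al * u)) := by
            exact mul_le_mul_of_nonneg_left h1 (Real.exp_pos _).le
        _ = Q * Real.exp ((lam - al) * u) := by
            rw [mul_comm (Real.exp (lam * u)) (Q * Real.exp (-al * u)), mul_assoc,
              ← Real.exp_add]; ring_nf
    have h3 : Q * Real.exp ((lam - al) * u) ≤ C * ((lam - al) * Real.exp ((lam - al) * u)) := by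
      have := mul_le_mul_of_nonneg_right hCQ (Real.exp_pos ((lam - al) * u)).le
      nlinarith [Real.exp_pos ((lam - al) * u)]
    linarith
  have hGt := hGanti Set.self_mem_Ici ht ht
  simp only [mul_zero, Real.exp_zero, mul_one] at hGt
  -- g t * exp(lam t) ≤ C * exp((lam - al) t) since g 0 - C ≤ 0
  have : g t * Real.exp (lam * t) ≤ C * Real.exp ((lam - al) * t) := by linarith
  have hexp : Real.exp ((lam - al) * t) = Real.exp (lam * t) * Real.exp (-al * t) := by
    rw [← Real.exp_add]; ring_nf
  rw [hexp] at this
  have hp := Real.exp_pos (lam * t)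
  have hgoal : g t * Real.exp (lam * t) ≤ C * Real.exp (-al * t) * Real.exp (lam * t) := by
    nlinarith [this, hp]
  exact le_of_mul_le_mul_right hgoal hp
/-- **Vanishing of the infected, detected and threatened states.**
For a solution of the SIDARE model on `[0,∞)` with nonnegative parameters
satisfying `γ_d + ξ_d > 0` and `γ_a + μ > 0`, nonnegative initial values,
and `β s(0) < γ_i + ξ_i + ν`, the states `i`, `d` and `a` tend to `0`
as `t → ∞`. -/
theorem sidare_i_d_a_tendsto_zero
    (β γi γd γa ν ξi ξd μ : ℝ)
    (hβ : 0 ≤ β) (hγi : 0 ≤ γi) (hγd : 0 ≤ γd) (hγa : 0 ≤ γa)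
    (hν : 0 ≤ ν) (hξi : 0 ≤ ξi) (hξd : 0 ≤ ξd) (hμ : 0 ≤ μ)
    (s i d a r e : ℝ → ℝ)
    (hs : ∀ t ∈ Set.Ici (0:ℝ),
      HasDerivWithinAt s (-β * s t * i t) (Set.Ici (0:ℝ)) t)
    (hi : ∀ t ∈ Set.Ici (0:ℝ),
      HasDerivWithinAt i (β * s t * i t - (γi + ξi + ν) * i t) (Set.Ici (0:ℝ)) t)
    (hd : ∀ t ∈ Set.Ici (0:ℝ),
      HasDerivWithinAt d (ν * i t - (γd + ξd) * d t) (Set.Ici (0:ℝ)) t)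
    (ha : ∀ t ∈ Set.Ici (0:ℝ),
      HasDerivWithinAt a (ξi * i t + ξd * d t - (γa + μ) * a t) (Set.Ici (0:ℝ)) t)
    (hr : ∀ t ∈ Set.Ici (0:ℝ),
      HasDerivWithinAt r (γi * i t + γd * d t + γa * a t) (Set.Ici (0:ℝ)) t)
    (he : ∀ t ∈ Set.Ici (0:ℝ),
      HasDerivWithinAt e (μ * a t) (Set.Ici (0:ℝ)) t)
    (hs0 : 0 ≤ s 0) (hi0 : 0 ≤ i 0) (hd0 : 0 ≤ d 0)
    (ha0 : 0 ≤ a 0) (hr0 : 0 ≤ r 0) (he0 : 0 ≤ e 0)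
    (h2 : 0 < γd + ξd) (h3 : 0 < γa + μ)
    (hR : β * s 0 < γi + ξi + ν) :
    Filter.Tendsto i Filter.atTop (nhds 0) ∧
    Filter.Tendsto d Filter.atTop (nhds 0) ∧
    Filter.Tendsto a Filter.atTop (nhds 0) := by
  clear hr he hr0 he0
  -- continuity
  have hscont : ContinuousOn s (Set.Ici 0) := fun t ht => (hs t ht).continuousWithinAt
  have hicont : ContinuousOn i (Set.Ici 0) := fun t ht => (hi t ht).continuousWithinAt
  -- formula for i
  have hi' : ∀ t ∈ Set.Ici (0:ℝ),
      HasDerivWithinAt i ((β * s t - (γi + ξi + ν)) * i t) (Set.Ici 0) t := by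
    intro t ht; convert hi t ht using 1; ring
  have hci : ContinuousOn (fun t => β * s t - (γi + ξi + ν)) (Set.Ici 0) :=
    (continuousOn_const.mul hscont).sub continuousOn_const
  have hieq := my_ode_exp hci hi'
  have hinn : ∀ t ∈ Set.Ici (0:ℝ), 0 ≤ i t := by
    intro t ht; rw [hieq t ht]; exact mul_nonneg hi0 (Real.exp_pos _).le
  -- formula for s and s ≤ s 0
  have hs' : ∀ t ∈ Set.Ici (0:ℝ),
      HasDerivWithinAt s ((-(β * i t)) * s t) (Set.Ici 0) t := by
    intro t ht; convert hs t ht using 1; ring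
  have hcs : ContinuousOn (fun t => -(β * i t)) (Set.Ici 0) :=
    (continuousOn_const.mul hicont).neg
  have hseq := my_ode_exp hcs hs'
  have hsle : ∀ t ∈ Set.Ici (0:ℝ), s t ≤ s 0 := by
    intro t ht
    rw [hseq t ht]
    have hint : (∫ x in (0:ℝ)..t, -(β * i x)) ≤ 0 := by
      have h1 : 0 ≤ ∫ x in (0:ℝ)..t, β * i x :=
        intervalIntegral.integral_nonneg ht (fun u hu => mul_nonneg hβ (hinn u hu.1))
      rw [intervalIntegral.integral_neg]; linarith
    have h2' : Real.exp (∫ x in (0:ℝ)..t, -(β * i x)) ≤ 1 := Real.exp_le_one_iff.mpr hint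
    nlinarith [h2']
  -- exponential bound on i
  set ε := (γi + ξi + ν) - β * s 0 with hεdef
  have hεpos : 0 < ε := by simp only [hεdef]; linarith
  have hibound : ∀ t ∈ Set.Ici (0:ℝ), i t ≤ i 0 * Real.exp (-ε * t) := by
    intro t ht
    rw [hieq t ht]
    refine mul_le_mul_of_nonneg_left ?_ hi0
    apply Real.exp_le_exp.mpr
    have hint1 : IntervalIntegrable (fun x => β * s x - (γi + ξi + ν)) volume 0 t := by
      apply ContinuousOn.intervalIntegrable
      rw [Set.uIcc_of_le ht]
      exact hci.mono Set.Icc_subset_Ici_self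
    have hint2 : IntervalIntegrable (fun _ : ℝ => -ε) volume 0 t :=
      intervalIntegrable_const
    have hmono : (∫ x in (0:ℝ)..t, (β * s x - (γi + ξi + ν)))
        ≤ ∫ x in (0:ℝ)..t, (-ε : ℝ) := by
      apply intervalIntegral.integral_mono_on ht hint1 hint2
      intro x hx
      have h4 : s x ≤ s 0 := hsle x hx.1
      have h5 : β * s x ≤ β * s 0 := mul_le_mul_of_nonneg_left h4 hβ
      simp only [hεdef]; linarith
    calc (∫ x in (0:ℝ)..t, (β * s x - (γi + ξi + ν))) ≤ ∫ x in (0:ℝ)..t, (-ε : ℝ) := hmono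
      _ = -ε * t := by simp [intervalIntegral.integral_const]; ring
  clear hR hseq hieq hsle hci hcs hs' hi' hs hi hscont hicont
  clear hεdef
  clear_value ε
  -- decay of d
  set lam := γd + ξd with hlamdef
  set αd := min ε lam / 2 with hαddef
  have hαdpos : 0 < αd := by
    have := lt_min hεpos h2
    simp only [hαddef]; positivity
  have hαdε : αd ≤ ε := by
    have h6 : min ε lam ≤ ε := min_le_left _ _
    simp only [hαddef]; linarith
  have hαdlam : αd < lam := by
    have h6 : min ε lam ≤ lam := min_le_right _ _
    simp only [hαddef]; linarith
  have hqd : ∀ t ∈ Set.Ici (0:ℝ), ν * i t ≤ ν * i 0 * Real.exp (-αd * t) := by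
    intro t ht
    have h7 : i t ≤ i 0 * Real.exp (-ε * t) := hibound t ht
    have h8 : Real.exp (-ε * t) ≤ Real.exp (-αd * t) := by
      apply Real.exp_le_exp.mpr; nlinarith [ht.out]
    have h9 : i t ≤ i 0 * Real.exp (-αd * t) := by
      calc i t ≤ i 0 * Real.exp (-ε * t) := h7
        _ ≤ i 0 * Real.exp (-αd * t) := mul_le_mul_of_nonneg_left h8 hi0
    nlinarith [h9, hν]
  have hdb := my_decay_bound (g := d) (q := fun t => ν * i t) hαdpos hαdlam
    (mul_nonneg hν hi0) (fun t ht => hd t ht)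
    (fun t ht => mul_nonneg hν (hinn t ht)) hqd hd0
  set Cd := max (d 0) (ν * i 0 / (lam - αd)) with hCddef
  have hCd0 : 0 ≤ Cd := le_trans hd0 (le_max_left _ _)
  clear hqd hd hlamdef hαddef hCddef
  clear_value lam αd Cd
  -- decay of a
  set m := γa + μ with hmdef
  set αa := min αd m / 2 with hαadef
  have hαapos : 0 < αa := by
    have := lt_min hαdpos h3
    simp only [hαadef]; positivity
  have hαaαd : αa ≤ αd := by
    have h6 : min αd m ≤ αd := min_le_left _ _
    simp only [hαadef]; linarith
  have hαam : αa < m := by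
    have h6 : min αd m ≤ m := min_le_right _ _
    simp only [hαadef]; linarith
  set Qa := ξi * i 0 + ξd * Cd with hQadef
  have hQa0 : 0 ≤ Qa := add_nonneg (mul_nonneg hξi hi0) (mul_nonneg hξd hCd0)
  have hqa : ∀ t ∈ Set.Ici (0:ℝ),
      ξi * i t + ξd * d t ≤ Qa * Real.exp (-αa * t) := by
    intro t ht
    have hta : (0:ℝ) ≤ t := ht.out
    have h7 : i t ≤ i 0 * Real.exp (-αa * t) := by
      calc i t ≤ i 0 * Real.exp (-ε * t) := hibound t ht
        _ ≤ i 0 * Real.exp (-αa * t) := by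
            refine mul_le_mul_of_nonneg_left (Real.exp_le_exp.mpr ?_) hi0
            nlinarith [hαdε, hαaαd]
    have h8 : d t ≤ Cd * Real.exp (-αa * t) := by
      calc d t ≤ Cd * Real.exp (-αd * t) := (hdb t ht).2
        _ ≤ Cd * Real.exp (-αa * t) := by
            refine mul_le_mul_of_nonneg_left (Real.exp_le_exp.mpr ?_) hCd0
            nlinarith [hαaαd]
    have h9 : ξi * i t ≤ ξi * (i 0 * Real.exp (-αa * t)) :=
      mul_le_mul_of_nonneg_left h7 hξi
    have h10 : ξd * d t ≤ ξd * (Cd * Real.exp (-αa * t)) :=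
      mul_le_mul_of_nonneg_left h8 hξd
    simp only [hQadef]; nlinarith [h9, h10]
  have hab := my_decay_bound (g := a) (q := fun t => ξi * i t + ξd * d t) hαapos hαam
    hQa0 (fun t ht => ha t ht)
    (fun t ht => add_nonneg (mul_nonneg hξi (hinn t ht)) (mul_nonneg hξd (hdb t ht).1))
    hqa ha0
  clear hqa ha hmdef hαadef hQadef
  clear_value m αa Qa
  -- tendsto lemmas
  have hT : ∀ C al : ℝ, 0 < al →
      Filter.Tendsto (fun t => C * Real.exp (-al * t)) Filter.atTop (nhds 0) := by
    intro C al hal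
    have h1 : Filter.Tendsto (fun t : ℝ => al * t) Filter.atTop Filter.atTop :=
      Filter.Tendsto.const_mul_atTop hal Filter.tendsto_id
    have h2' : Filter.Tendsto (fun t : ℝ => Real.exp (-(al * t))) Filter.atTop (nhds 0) :=
      Real.tendsto_exp_atBot.comp (tendsto_neg_atBot_iff.mpr h1)
    have h3' := h2'.const_mul C
    simpa [neg_mul, mul_zero] using h3'
  have hsq : ∀ (f : ℝ → ℝ) (C al : ℝ), 0 < al →
      (∀ t ∈ Set.Ici (0:ℝ), 0 ≤ f t ∧ f t ≤ C * Real.exp (-al * t)) →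
      Filter.Tendsto f Filter.atTop (nhds 0) := by
    intro f C al hal hb
    apply squeeze_zero' ?_ ?_ (hT C al hal)
    · filter_upwards [Filter.eventually_ge_atTop (0:ℝ)] with t ht using (hb t ht).1
    · filter_upwards [Filter.eventually_ge_atTop (0:ℝ)] with t ht using (hb t ht).2
  refine ⟨?_, ?_, ?_⟩
  · exact hsq i (i 0) ε hεpos (fun t ht => ⟨hinn t ht, hibound t ht⟩)
  · exact hsq d Cd αd hαdpos (fun t ht => hdb t ht)
  · exact hsq a (max (a 0) (Qa / (m - αa))) αa hαapos (fun t ht => hab t ht)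
end

section
/- Let ρ > 0 and let ν, ξ_i, ξ_d, γ_d, γ_a, μ be nonnegative reals with γ_d + ξ_d > 0 and γ_a + μ > 0. Then there exist positive reals θ₁, θ₂ with θ₁ ν + θ₂ ξ_i < ρ and θ₂ ξ_d < θ₁ (γ_d + ξ_d), and positive reals φ₁, φ₂, φ₃, such that for all nonnegative reals i, d, a: −ρ i + θ₁ (ν i − (γ_d + ξ_d) d) + θ₂ (ξ_i i + ξ_d d − (γ_a + μ) a) ≤ −φ₁ i − φ₂ d − φ₃ a. -/
/-- **Key Lyapunov inequality for `V₂ = i + θ₁ d + θ₂ a`.**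
Given `ρ > 0` and nonnegative `ν, ξ_i, ξ_d, γ_d, γ_a, μ` with `γ_d + ξ_d > 0`
and `γ_a + μ > 0`, there exist positive `θ₁, θ₂` with `θ₁ ν + θ₂ ξ_i < ρ` and
`θ₂ ξ_d < θ₁ (γ_d + ξ_d)`, and positive `φ₁, φ₂, φ₃`, such that for all
nonnegative `i, d, a`:
`−ρ i + θ₁ (ν i − (γ_d + ξ_d) d) + θ₂ (ξ_i i + ξ_d d − (γ_a + μ) a)
  ≤ −φ₁ i − φ₂ d − φ₃ a`. -/
theorem sidare_lyapunov_V2_inequality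
    (ρ ν ξi ξd γd γa μ : ℝ)
    (hρ : 0 < ρ)
    (hν : 0 ≤ ν) (hξi : 0 ≤ ξi) (hξd : 0 ≤ ξd)
    (hγd : 0 ≤ γd) (hγa : 0 ≤ γa) (hμ : 0 ≤ μ)
    (h2 : 0 < γd + ξd) (h3 : 0 < γa + μ) :
    ∃ θ₁ θ₂ φ₁ φ₂ φ₃ : ℝ,
      0 < θ₁ ∧ 0 < θ₂ ∧
      θ₁ * ν + θ₂ * ξi < ρ ∧
      θ₂ * ξd < θ₁ * (γd + ξd) ∧
      0 < φ₁ ∧ 0 < φ₂ ∧ 0 < φ₃ ∧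
      ∀ i d a : ℝ, 0 ≤ i → 0 ≤ d → 0 ≤ a →
        -ρ * i + θ₁ * (ν * i - (γd + ξd) * d) + θ₂ * (ξi * i + ξd * d - (γa + μ) * a)
          ≤ -φ₁ * i - φ₂ * d - φ₃ * a := by
  set θ₁ : ℝ := ρ / (2 * (ν + 1)) with hθ₁def
  set θ₂ : ℝ := min (ρ / (4 * (ξi + 1))) (θ₁ * (γd + ξd) / (2 * (ξd + 1))) with hθ₂def
  have hθ₁ : 0 < θ₁ := by positivity
  have hθ₂ : 0 < θ₂ := by
    apply lt_min
    · positivity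
    · positivity
  have hA : θ₁ * ν + θ₂ * ξi < ρ := by
    have h1 : θ₁ * ν ≤ ρ / 2 := by
      rw [hθ₁def]
      rw [div_mul_eq_mul_div, div_le_div_iff₀ (by positivity) (by norm_num)]
      nlinarith
    have h2' : θ₂ * ξi < ρ / 2 := by
      have : θ₂ ≤ ρ / (4 * (ξi + 1)) := min_le_left _ _
      have h4 : θ₂ * ξi ≤ ρ / (4 * (ξi + 1)) * ξi := by
        apply mul_le_mul_of_nonneg_right this hξi
      have h5 : ρ / (4 * (ξi + 1)) * ξi < ρ / 2 := by
        rw [div_mul_eq_mul_div, div_lt_div_iff₀ (by positivity) (by norm_num)]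
        nlinarith
      linarith
    linarith
  have hB : θ₂ * ξd < θ₁ * (γd + ξd) := by
    have : θ₂ ≤ θ₁ * (γd + ξd) / (2 * (ξd + 1)) := min_le_right _ _
    have h4 : θ₂ * ξd ≤ θ₁ * (γd + ξd) / (2 * (ξd + 1)) * ξd :=
      mul_le_mul_of_nonneg_right this hξd
    have h5 : θ₁ * (γd + ξd) / (2 * (ξd + 1)) * ξd < θ₁ * (γd + ξd) := by
      rw [div_mul_eq_mul_div, div_lt_iff₀ (by positivity)]
      nlinarith [mul_pos hθ₁ h2]
    linarith
  refine ⟨θ₁, θ₂, ρ - (θ₁ * ν + θ₂ * ξi), θ₁ * (γd + ξd) - θ₂ * ξd, θ₂ * (γa + μ),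
    hθ₁, hθ₂, hA, hB, by linarith, by linarith, by positivity, ?_⟩
  intro i d a hi hd ha
  nlinarith
end

section
/- Let s, i, d, a, e be differentiable functions on [0,∞) and u : [0,∞) → ℝ a continuous function with 0 ≤ u(t) ≤ 1 for all t ≥ 0, satisfying the controlled SIDARE equations s' = −β s i (1 − u), i' = β s i (1 − u) − (γ_i + ξ_i + ν) i, d' = ν i − (γ_d + ξ_d) d, a' = ξ_i i + ξ_d d − γ_a a − μ̄(a), e' = μ̄(a), with nonnegative parameters β, γ_i, γ_d, γ_a, ν, ξ_i, ξ_d, constants 0 ≤ μ ≤ μ̂, h̄ > 0, and μ̄ the piecewise-linear mortality function. If s(0), i(0), d(0), a(0), e(0) are all nonnegative, then s(t), i(t), d(t), a(t), e(t) are nonnegative for all t ≥ 0. -/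
lemma nonneg_of_hasDerivWithinAt (f f' K : ℝ → ℝ)
    (hf : ∀ t ∈ Set.Ici (0:ℝ), HasDerivWithinAt f (f' t) (Set.Ici (0:ℝ)) t)
    (hK : ContinuousOn K (Set.Ici (0:ℝ)))
    (hf0 : 0 ≤ f 0)
    (hyp : ∀ t ∈ Set.Ici (0:ℝ), f t ≤ 0 → K t * f t ≤ f' t) :
    ∀ t ∈ Set.Ici (0:ℝ), 0 ≤ f t := by
  intro t₀ ht₀
  by_contra hneg
  push_neg at hneg
  have hfc : ContinuousOn f (Set.Ici (0:ℝ)) := fun x hx => (hf x hx).continuousWithinAt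
  have ht₀pos : 0 < t₀ := by
    rcases lt_or_eq_of_le (Set.mem_Ici.mp ht₀) with h | h
    · exact h
    · exfalso; rw [← h] at hneg; linarith
  set S : Set ℝ := Set.Icc 0 t₀ ∩ f ⁻¹' (Set.Ici 0) with hS
  have hSne : S.Nonempty := ⟨0, ⟨le_refl 0, le_of_lt ht₀pos⟩, hf0⟩
  have hScomp : IsCompact S := by
    have hclosed : IsClosed S :=
      ContinuousOn.preimage_isClosed_of_isClosed
        (hfc.mono (fun x hx => hx.1)) isClosed_Icc isClosed_Ici
    exact (isCompact_Icc).of_isClosed_subset hclosed (fun x hx => hx.1)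
  set τ := sSup S with hτ
  have hτS : τ ∈ S := hScomp.sSup_mem hSne
  have hτ0 : (0:ℝ) ≤ τ := hτS.1.1
  have hτt₀ : τ ≤ t₀ := hτS.1.2
  have hfτ : 0 ≤ f τ := hτS.2
  have hτlt : τ < t₀ := by
    rcases lt_or_eq_of_le hτt₀ with h | h
    · exact h
    · exfalso; rw [h] at hfτ; linarith
  have hub : ∀ x ∈ S, x ≤ τ := fun x hx => le_csSup hScomp.bddAbove hx
  have hnegOn : ∀ x ∈ Set.Ioc τ t₀, f x < 0 := by
    intro x hx
    by_contra hge
    push_neg at hge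
    have hxS : x ∈ S := ⟨⟨le_trans hτ0 (le_of_lt hx.1), hx.2⟩, hge⟩
    exact absurd (hub x hxS) (not_le.2 hx.1)
  have hfτ0 : f τ = 0 := by
    have hten : Filter.Tendsto f (nhdsWithin τ (Set.Ioc τ t₀)) (nhds (f τ)) := by
      refine Filter.Tendsto.mono_left ((hfc τ hτ0).tendsto) (nhdsWithin_mono τ ?_)
      intro x hx
      exact le_trans hτ0 (le_of_lt hx.1)
    have hne : (nhdsWithin τ (Set.Ioc τ t₀)).NeBot := left_nhdsWithin_Ioc_neBot hτlt
    have hle : f τ ≤ 0 :=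
      le_of_tendsto hten (Filter.eventually_of_mem self_mem_nhdsWithin
        (fun x hx => le_of_lt (hnegOn x hx)))
    linarith
  set Ke : ℝ → ℝ := fun t => K (max t 0) with hKe
  have hKec : Continuous Ke :=
    hK.comp_continuous (continuous_id.max continuous_const) (fun x => le_max_right x 0)
  have hKeeq : ∀ x : ℝ, 0 ≤ x → Ke x = K x := fun x hx => by
    simp only [hKe, max_eq_left hx]
  set G : ℝ → ℝ := fun t => ∫ x in τ..t, Ke x with hG
  have hGd : ∀ x : ℝ, HasDerivAt G (Ke x) x := fun x =>
    (hKec.integral_hasStrictDerivAt τ x).hasDerivAt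
  have hGc : Continuous G := by
    rw [continuous_iff_continuousAt]; exact fun x => (hGd x).continuousAt
  set g : ℝ → ℝ := fun t => f t * Real.exp (-(G t)) with hg
  have hgderiv : ∀ x ∈ Set.Ioo τ t₀,
      HasDerivAt g ((f' x - Ke x * f x) * Real.exp (-(G x))) x := by
    intro x hx
    have hx0 : 0 < x := lt_of_le_of_lt hτ0 hx.1
    have hfx : HasDerivAt f (f' x) x := by
      refine (hf x (le_of_lt hx0)).hasDerivAt ?_
      exact Filter.mem_of_superset (isOpen_Ioi.mem_nhds hx0) Set.Ioi_subset_Ici_self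
    have hex : HasDerivAt (fun t => Real.exp (-(G t))) (-(Ke x) * Real.exp (-(G x))) x := by
      have := (Real.hasDerivAt_exp (-(G x))).comp x ((hGd x).neg)
      simpa [mul_comm, Function.comp_def] using this
    have : HasDerivAt g _ x := hfx.mul hex
    convert this using 1
    ring
  have hmono : MonotoneOn g (Set.Icc τ t₀) := by
    apply monotoneOn_of_deriv_nonneg (convex_Icc τ t₀)
    · exact ((hfc.mono (fun x hx => le_trans hτ0 hx.1)).mul
        ((Real.continuous_exp.comp hGc.neg).continuousOn))
    · rw [interior_Icc]
      exact fun x hx => ((hgderiv x hx).differentiableAt).differentiableWithinAt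
    · rw [interior_Icc]
      intro x hx
      rw [(hgderiv x hx).deriv]
      have hx0 : (0:ℝ) ≤ x := le_trans hτ0 (le_of_lt hx.1)
      have hfx_neg : f x ≤ 0 := le_of_lt (hnegOn x ⟨hx.1, le_of_lt hx.2⟩)
      have h1 : K x * f x ≤ f' x := hyp x hx0 hfx_neg
      have h2 : 0 ≤ f' x - Ke x * f x := by
        rw [hKeeq x hx0]; linarith
      exact mul_nonneg h2 (le_of_lt (Real.exp_pos _))
  have hgτ : g τ = 0 := by simp [hg, hfτ0]
  have := hmono (Set.left_mem_Icc.2 hτt₀) (Set.right_mem_Icc.2 hτt₀) hτt₀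
  rw [hgτ] at this
  simp only [hg] at this
  have hexp : 0 < Real.exp (-(G t₀)) := Real.exp_pos _
  nlinarith [this, hexp, hneg]


/-- **Nonnegativity of the controlled SIDARE states.**
For a solution of the controlled SIDARE model on `[0,∞)` with nonnegative
parameters, piecewise-linear mortality `μ̄` (with `0 ≤ μ ≤ μ̂`, `h̄ > 0`) and a
continuous control `u` taking values in `[0,1]`, nonnegative initial values at
`t = 0` imply that `s, i, d, a, e` remain nonnegative for all `t ≥ 0`. -/
theorem controlled_sidare_states_nonneg
    (β γi γd γa ν ξi ξd : ℝ)
    (hβ : 0 ≤ β) (hγi : 0 ≤ γi) (hγd : 0 ≤ γd) (hγa : 0 ≤ γa)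
    (hν : 0 ≤ ν) (hξi : 0 ≤ ξi) (hξd : 0 ≤ ξd)
    (μ μHat hBar : ℝ) (hμ : 0 ≤ μ) (hμHat : μ ≤ μHat) (hhBar : 0 < hBar)
    (μbar : ℝ → ℝ)
    (hμbar : ∀ x : ℝ, μbar x = if x ≤ hBar then μ * x else μ * hBar + μHat * (x - hBar))
    (u : ℝ → ℝ) (hu_cont : Continuous u)
    (hu : ∀ t ∈ Set.Ici (0:ℝ), u t ∈ Set.Icc (0:ℝ) 1)
    (s i d a e : ℝ → ℝ)
    (hs : ∀ t ∈ Set.Ici (0:ℝ),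
      HasDerivWithinAt s (-β * s t * i t * (1 - u t)) (Set.Ici (0:ℝ)) t)
    (hi : ∀ t ∈ Set.Ici (0:ℝ),
      HasDerivWithinAt i (β * s t * i t * (1 - u t) - (γi + ξi + ν) * i t)
        (Set.Ici (0:ℝ)) t)
    (hd : ∀ t ∈ Set.Ici (0:ℝ),
      HasDerivWithinAt d (ν * i t - (γd + ξd) * d t) (Set.Ici (0:ℝ)) t)
    (ha : ∀ t ∈ Set.Ici (0:ℝ),
      HasDerivWithinAt a (ξi * i t + ξd * d t - γa * a t - μbar (a t))
        (Set.Ici (0:ℝ)) t)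
    (he : ∀ t ∈ Set.Ici (0:ℝ),
      HasDerivWithinAt e (μbar (a t)) (Set.Ici (0:ℝ)) t)
    (hs0 : 0 ≤ s 0) (hi0 : 0 ≤ i 0) (hd0 : 0 ≤ d 0)
    (ha0 : 0 ≤ a 0) (he0 : 0 ≤ e 0) :
    ∀ t ∈ Set.Ici (0:ℝ),
      0 ≤ s t ∧ 0 ≤ i t ∧ 0 ≤ d t ∧ 0 ≤ a t ∧ 0 ≤ e t := by
  -- continuity of the states
  have hsc : ContinuousOn s (Set.Ici (0:ℝ)) := fun x hx => (hs x hx).continuousWithinAt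
  have hic : ContinuousOn i (Set.Ici (0:ℝ)) := fun x hx => (hi x hx).continuousWithinAt
  have hdc : ContinuousOn d (Set.Ici (0:ℝ)) := fun x hx => (hd x hx).continuousWithinAt
  have huc : Continuous (fun t => 1 - u t) := continuous_const.sub hu_cont
  -- s nonnegative
  have hsn : ∀ t ∈ Set.Ici (0:ℝ), 0 ≤ s t := by
    apply nonneg_of_hasDerivWithinAt s (fun t => -β * s t * i t * (1 - u t))
      (fun t => -β * i t * (1 - u t)) hs
    · exact (continuousOn_const.mul hic).mul huc.continuousOn
    · exact hs0
    · intro t _ _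
      apply le_of_eq; ring
  -- i nonnegative
  have hin : ∀ t ∈ Set.Ici (0:ℝ), 0 ≤ i t := by
    apply nonneg_of_hasDerivWithinAt i
      (fun t => β * s t * i t * (1 - u t) - (γi + ξi + ν) * i t)
      (fun t => β * s t * (1 - u t) - (γi + ξi + ν)) hi
    · exact ((continuousOn_const.mul hsc).mul huc.continuousOn).sub continuousOn_const
    · exact hi0
    · intro t _ _
      apply le_of_eq; ring
  -- d nonnegative
  have hdn : ∀ t ∈ Set.Ici (0:ℝ), 0 ≤ d t := by
    apply nonneg_of_hasDerivWithinAt d (fun t => ν * i t - (γd + ξd) * d t)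
      (fun _ => -(γd + ξd)) hd continuousOn_const hd0
    intro t ht _
    have := hin t ht
    nlinarith
  -- a nonnegative
  have han : ∀ t ∈ Set.Ici (0:ℝ), 0 ≤ a t := by
    apply nonneg_of_hasDerivWithinAt a
      (fun t => ξi * i t + ξd * d t - γa * a t - μbar (a t))
      (fun _ => -(γa + μ)) ha continuousOn_const ha0
    intro t ht hat
    have h1 := hin t ht
    have h2 := hdn t ht
    have h3 : μbar (a t) = μ * a t := by
      rw [hμbar (a t), if_pos (le_trans hat (le_of_lt hhBar))]
    rw [h3]
    nlinarith
  -- e nonnegative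
  have hen : ∀ t ∈ Set.Ici (0:ℝ), 0 ≤ e t := by
    apply nonneg_of_hasDerivWithinAt e (fun t => μbar (a t)) (fun _ => 0) he
      continuousOn_const he0
    intro t ht _
    have hat := han t ht
    have hμb : 0 ≤ μbar (a t) := by
      rw [hμbar (a t)]
      split_ifs with h
      · exact mul_nonneg hμ hat
      · push_neg at h
        have := le_trans hμ hμHat
        nlinarith
    linarith
  intro t ht
  exact ⟨hsn t ht, hin t ht, hdn t ht, han t ht, hen t ht⟩
end
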